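/- arXiv:2303.06772 — 4 statements merged into one kernel-verified Lean document; each statement's English description precedes it below -/
import Mathlib

section
/- Let n ≥ 2 and let A be an n-by-n complex normal matrix (A* A = A A*). If λ and μ are any two distinct eigenvalues of A, then for every index k ∈ {1, …, n}, the field of values of the principal submatrix A_{(k)} has nonempty intersection with the closed segment [λ, μ]; in particular, F(A_{(k)}) meets every side of the polygon ∂F(A) = ∂ conv(σ(A)). -/
/-!
Eigenvectors `u`, `v` of a normal matrix for distinct eigenvalues `λ`, `μ` are orthogonal, so for
`w = αu + βv` the Rayleigh quotient `w* A w / w* w` is the convex combination of `λ` and `μ` with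
weights `|α|²‖u‖²` and `|β|²‖v‖²`, a point of `[λ, μ]`. Choosing `(α, β) ≠ 0` with `w_k = 0`, the
vector `w` with its `k`-th entry deleted has the same Rayleigh quotient for `A_{(k)}`, which
therefore lies in `F(A_{(k)})`.
-/

open Matrix Complex

/-- The field of values (numerical range) of a complex matrix:
`F(A) = { x* A x : x* x = 1 }`. -/
def fov {n : ℕ} (A : Matrix (Fin n) (Fin n) ℂ) : Set ℂ :=
  {z | ∃ x : Fin n → ℂ, star x ⬝ᵥ x = 1 ∧ star x ⬝ᵥ A.mulVec x = z}

/-- The principal submatrix `A_{(k)}` obtained by deleting the `k`-th row and column. -/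
def subAt {n : ℕ} (A : Matrix (Fin (n + 1)) (Fin (n + 1)) ℂ) (k : Fin (n + 1)) :
    Matrix (Fin n) (Fin n) ℂ :=
  A.submatrix k.succAbove k.succAbove

namespace Matrix

variable {ι R : Type*} [Fintype ι]

def rayleighQuotient [Field R] [StarRing R] (A : Matrix ι ι R) (x : ι → R) : R :=
  (star x ⬝ᵥ A *ᵥ x) / (star x ⬝ᵥ x)

lemma exists_mulVec_eq_smul_of_mem_spectrum [DecidableEq ι] [Field R] {A : Matrix ι ι R} {μ : R}
    (h : μ ∈ spectrum R A) : ∃ u : ι → R, u ≠ 0 ∧ A *ᵥ u = μ • u := by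
  rw [← spectrum_toLin', ← Module.End.hasEigenvalue_iff_mem_spectrum] at h
  obtain ⟨u, hu⟩ := h.exists_hasEigenvector
  exact ⟨u, hu.2, by simpa using hu.apply_eq_smul⟩

section StarOrderedRing

variable [CommRing R] [PartialOrder R] [StarRing R] [StarOrderedRing R] [NoZeroDivisors R]
  {A : Matrix ι ι R}

lemma conjTranspose_mulVec_eq_zero_of_normal (hA : Aᴴ * A = A * Aᴴ) {u : ι → R}
    (h : A *ᵥ u = 0) : Aᴴ *ᵥ u = 0 := by
  rw [← self_mul_conjTranspose_mulVec_eq_zero, ← hA, ← mulVec_mulVec, h, mulVec_zero]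

lemma conjTranspose_mulVec_eq_star_smul_of_normal [DecidableEq ι] (hA : Aᴴ * A = A * Aᴴ)
    {μ : R} {u : ι → R} (h : A *ᵥ u = μ • u) : Aᴴ *ᵥ u = star μ • u := by
  set B := A - μ • 1
  have hB : Bᴴ * B = B * Bᴴ := by
    simp only [B, conjTranspose_sub, conjTranspose_smul, conjTranspose_one, Matrix.mul_sub,
      Matrix.sub_mul, Matrix.smul_mul, Matrix.mul_smul, Matrix.one_mul, Matrix.mul_one, hA]
    module
  have hBu : B *ᵥ u = 0 := by rw [sub_mulVec, smul_mulVec, one_mulVec, h, sub_self]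
  have := conjTranspose_mulVec_eq_zero_of_normal hB hBu
  rwa [conjTranspose_sub, conjTranspose_smul, conjTranspose_one, sub_mulVec, smul_mulVec,
    one_mulVec, sub_eq_zero] at this

lemma dotProduct_star_eq_zero_of_normal [DecidableEq ι] (hA : Aᴴ * A = A * Aᴴ) {lam mu : R}
    {u v : ι → R} (hu : A *ᵥ u = lam • u) (hv : A *ᵥ v = mu • v) (hne : lam ≠ mu) :
    star u ⬝ᵥ v = 0 := by
  have hAu : star u ᵥ* A = lam • star u := by
    simpa [star_mulVec] using congrArg star (conjTranspose_mulVec_eq_star_smul_of_normal hA hu)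
  have h : lam * (star u ⬝ᵥ v) = mu * (star u ⬝ᵥ v) := by
    rw [← smul_eq_mul, ← smul_dotProduct, ← hAu, ← dotProduct_mulVec, hv, dotProduct_smul,
      smul_eq_mul]
  exact (mul_eq_mul_right_iff.mp h).resolve_left hne

lemma exists_smul_add_smul_apply_eq_zero {u v : ι → R} (hu : u ≠ 0) (hv : v ≠ 0)
    (hvu : star v ⬝ᵥ u = 0) (k : ι) : ∃ α β : R, (α • u + β • v) k = 0 ∧ α • u + β • v ≠ 0 := by
  by_cases huk : u k = 0
  · exact ⟨1, 0, by simp [huk], by simpa using hu⟩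
  refine ⟨-v k, u k, by simp [mul_comm], fun h => huk ?_⟩
  have := congrArg (star v ⬝ᵥ ·) h
  simp only [dotProduct_add, dotProduct_smul, hvu, dotProduct_zero, smul_eq_mul,
    mul_zero, zero_add, mul_eq_zero, dotProduct_star_self_eq_zero] at this
  exact this.resolve_right hv

end StarOrderedRing

section SuccAbove

variable [NonUnitalNonAssocSemiring R] {n : ℕ}

lemma dotProduct_eq_comp_succAbove {x y : Fin (n + 1) → R} {k : Fin (n + 1)}
    (h : y k * x k = 0) : y ⬝ᵥ x = (y ∘ k.succAbove) ⬝ᵥ (x ∘ k.succAbove) := by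
  rw [dotProduct, Fin.sum_univ_succAbove _ k, h, zero_add]
  rfl

lemma dotProduct_mulVec_eq_submatrix_succAbove {x y : Fin (n + 1) → R} {k : Fin (n + 1)}
    (A : Matrix (Fin (n + 1)) (Fin (n + 1)) R) (hy : y k = 0) (hx : x k = 0) :
    y ⬝ᵥ A *ᵥ x =
      (y ∘ k.succAbove) ⬝ᵥ A.submatrix k.succAbove k.succAbove *ᵥ (x ∘ k.succAbove) := by
  rw [dotProduct_eq_comp_succAbove (by rw [hy, zero_mul])]
  congr 1
  ext i
  exact dotProduct_eq_comp_succAbove (by rw [hx, mul_zero])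

end SuccAbove

open scoped ComplexOrder in
lemma rayleighQuotient_add_mem_segment {𝕜 : Type*} [RCLike 𝕜] {A : Matrix ι ι 𝕜} {lam mu : 𝕜}
    {u v : ι → 𝕜} (hu : A *ᵥ u = lam • u) (hv : A *ᵥ v = mu • v) (huv : star u ⬝ᵥ v = 0)
    (hw : u + v ≠ 0) : A.rayleighQuotient (u + v) ∈ segment ℝ lam mu := by
  have hvu : star v ⬝ᵥ u = 0 := by rw [star_dotProduct, huv, star_zero]
  obtain ⟨a, ha, hua⟩ := RCLike.nonneg_iff_exists_ofReal.mp (dotProduct_star_self_nonneg u)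
  obtain ⟨b, hb, hvb⟩ := RCLike.nonneg_iff_exists_ofReal.mp (dotProduct_star_self_nonneg v)
  have hden : star (u + v) ⬝ᵥ (u + v) = ((a + b : ℝ) : 𝕜) := by
    simp only [star_add, add_dotProduct, dotProduct_add, huv, hvu, ← hua, ← hvb]
    push_cast; ring
  have hnum : star (u + v) ⬝ᵥ A *ᵥ (u + v) = a * lam + b * mu := by
    simp only [mulVec_add, hu, hv, star_add, add_dotProduct, dotProduct_add, dotProduct_smul, huv,
      hvu, ← hua, ← hvb, smul_eq_mul]
    ring
  have hab : 0 < a + b := by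
    have := dotProduct_star_self_pos_iff.mpr hw
    rwa [hden, RCLike.ofReal_pos] at this
  refine mem_segment_iff_div.mpr ⟨a, b, ha, hb, hab, ?_⟩
  rw [rayleighQuotient, hnum, hden, RCLike.real_smul_eq_coe_mul, RCLike.real_smul_eq_coe_mul]
  have : ((a + b : ℝ) : 𝕜) ≠ 0 := RCLike.ofReal_ne_zero.mpr hab.ne'
  push_cast at this ⊢
  field_simp

end Matrix

open scoped ComplexOrder in
lemma rayleighQuotient_mem_fov {n : ℕ} (A : Matrix (Fin n) (Fin n) ℂ) {x : Fin n → ℂ}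
    (hx : x ≠ 0) : A.rayleighQuotient x ∈ fov A := by
  set c := (star x ⬝ᵥ x).re
  have hxc : star x ⬝ᵥ x = c :=
    Complex.eq_re_of_ofReal_le (by rw [Complex.ofReal_zero]; exact dotProduct_star_self_nonneg x)
  have hc : 0 < c := Complex.zero_lt_real.mp (hxc ▸ dotProduct_star_self_pos_iff.mpr hx)
  set r : ℂ := (((√c)⁻¹ : ℝ) : ℂ)
  have hr : r * r * c = 1 := by
    have hsq : ((√c : ℝ) : ℂ) * (√c : ℝ) = c := by exact_mod_cast Real.mul_self_sqrt hc.le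
    have hne : ((√c : ℝ) : ℂ) ≠ 0 := by exact_mod_cast (Real.sqrt_pos.mpr hc).ne'
    simp only [r, Complex.ofReal_inv]
    rw [← hsq]
    field_simp
  have hstar : star (r • x) = r • star x := by
    rw [star_smul, Complex.star_def, Complex.conj_ofReal]
  refine ⟨r • x, ?_, ?_⟩
  · rw [hstar, smul_dotProduct, dotProduct_smul, hxc, smul_eq_mul, smul_eq_mul, ← mul_assoc, hr]
  · rw [hstar, mulVec_smul, smul_dotProduct, dotProduct_smul, smul_eq_mul, smul_eq_mul,
      rayleighQuotient, hxc, eq_div_iff (Complex.ofReal_ne_zero.mpr hc.ne')]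
    linear_combination (star x ⬝ᵥ A *ᵥ x) * hr

open scoped ComplexOrder in
lemma rayleighQuotient_mem_fov_subAt {n : ℕ} (A : Matrix (Fin (n + 1)) (Fin (n + 1)) ℂ)
    {x : Fin (n + 1) → ℂ} {k : Fin (n + 1)} (hx : x ≠ 0) (hxk : x k = 0) :
    A.rayleighQuotient x ∈ fov (subAt A k) := by
  have hsxk : star x k = 0 := by simp [hxk]
  have hself : star x ⬝ᵥ x = _ := dotProduct_eq_comp_succAbove (by rw [hsxk, zero_mul])
  rw [rayleighQuotient, hself, dotProduct_mulVec_eq_submatrix_succAbove A hsxk hxk]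
  refine rayleighQuotient_mem_fov (subAt A k) fun h => hx ?_
  rw [← dotProduct_star_self_eq_zero, hself]
  exact dotProduct_star_self_eq_zero.mpr h

theorem fov_deleted_meets_segment_of_normal_general {n : ℕ}
    (A : Matrix (Fin (n + 1)) (Fin (n + 1)) ℂ)
    (hnormal : Aᴴ * A = A * Aᴴ)
    (lam mu : ℂ) (hlam : lam ∈ spectrum ℂ A) (hmu : mu ∈ spectrum ℂ A) (hne : lam ≠ mu) :
    ∀ k : Fin (n + 1), (fov (subAt A k) ∩ segment ℝ lam mu).Nonempty := by
  intro k
  open scoped ComplexOrder in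
  obtain ⟨u, hu0, hu⟩ := exists_mulVec_eq_smul_of_mem_spectrum hlam
  obtain ⟨v, hv0, hv⟩ := exists_mulVec_eq_smul_of_mem_spectrum hmu
  obtain ⟨α, β, hwk, hw⟩ := exists_smul_add_smul_apply_eq_zero hu0 hv0
    (dotProduct_star_eq_zero_of_normal hnormal hv hu hne.symm) k
  have hαu : A *ᵥ (α • u) = lam • α • u := by rw [mulVec_smul, hu, smul_comm]
  have hβv : A *ᵥ (β • v) = mu • β • v := by rw [mulVec_smul, hv, smul_comm]
  exact ⟨_, rayleighQuotient_mem_fov_subAt A hw hwk, rayleighQuotient_add_mem_segment hαu hβv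
    (dotProduct_star_eq_zero_of_normal hnormal hαu hβv hne) hw⟩

/-- If `A` is an `(n+1)`-by-`(n+1)` normal matrix (`n + 1 ≥ 2`) and `λ ≠ μ` are eigenvalues
of `A`, then for every `k` the field of values of the principal submatrix `A_{(k)}` meets the
closed segment `[λ, μ]`; in particular it meets every side of the polygon `∂F(A)`. -/
theorem fov_deleted_meets_segment_of_normal {n : ℕ} (hn : 1 ≤ n)
    (A : Matrix (Fin (n + 1)) (Fin (n + 1)) ℂ)
    (hnormal : Aᴴ * A = A * Aᴴ)
    (lam mu : ℂ) (hlam : lam ∈ spectrum ℂ A) (hmu : mu ∈ spectrum ℂ A) (hne : lam ≠ mu) :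
    ∀ k : Fin (n + 1), (fov (subAt A k) ∩ segment ℝ lam mu).Nonempty :=
  fov_deleted_meets_segment_of_normal_general A hnormal lam mu hlam hmu hne
end

section
/- Let n ≥ 2, let A be an n-by-n complex matrix, and suppose v ∈ ℂⁿ is a unit eigenvector of A with eigenvalue λ (Av = λv, v* v = 1) whose k-th entry is zero (v_k = 0). Then λ belongs to the field of values of the principal submatrix A_{(k)}. -/
open Matrix Complex

/-- If `v` is a unit eigenvector of `A` for the eigenvalue `λ` whose `k`-th entry vanishes,
then `λ` belongs to the field of values of the principal submatrix `A_{(k)}`. -/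
theorem eigenvalue_mem_fov_deleted {n : ℕ} (hn : 1 ≤ n)
    (A : Matrix (Fin (n + 1)) (Fin (n + 1)) ℂ) (k : Fin (n + 1)) (lam : ℂ)
    (v : Fin (n + 1) → ℂ) (heig : A.mulVec v = lam • v)
    (hv : star v ⬝ᵥ v = 1) (hvk : v k = 0) :
    lam ∈ fov (subAt A k) := by
  have hx1 : star (v ∘ k.succAbove) ⬝ᵥ (v ∘ k.succAbove) = 1 := by
    have h := Fin.sum_univ_succAbove (fun i => star (v i) * v i) k
    simp only [dotProduct, Pi.star_apply] at hv ⊢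
    rw [h, hvk] at hv
    simpa using hv
  refine ⟨v ∘ k.succAbove, hx1, ?_⟩
  have hmv : ∀ i, (subAt A k).mulVec (v ∘ k.succAbove) i = lam * v (k.succAbove i) := by
    intro i
    have h1 : A.mulVec v (k.succAbove i) = lam * v (k.succAbove i) := by
      rw [heig]; simp
    rw [← h1]
    simp only [mulVec, dotProduct, subAt, submatrix_apply, Function.comp_apply]
    rw [Fin.sum_univ_succAbove (fun j => A (k.succAbove i) j * v j) k]
    simp [hvk]
  have : star (v ∘ k.succAbove) ⬝ᵥ (subAt A k).mulVec (v ∘ k.succAbove)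
      = lam * (star (v ∘ k.succAbove) ⬝ᵥ (v ∘ k.succAbove)) := by
    simp only [dotProduct, Pi.star_apply, Function.comp_apply, hmv, Finset.mul_sum]
    apply Finset.sum_congr rfl
    intro j _
    ring
  rw [this, hx1, mul_one]
end

section
/- Let n ≥ 2, let A be an n-by-n complex matrix, and let v, w ∈ ℂⁿ be orthonormal eigenvectors of A with Av = λv and Aw = μw. If the k-th entries of both v and w vanish (v_k = w_k = 0), then the entire closed segment [λ, μ] is contained in the field of values of the principal submatrix A_{(k)}. -/
open Matrix Complex

lemma dot_delete {n : ℕ} (A : Matrix (Fin (n+1)) (Fin (n+1)) ℂ) (k : Fin (n+1))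
    (x : Fin (n+1) → ℂ) (hxk : x k = 0) :
    star (fun i => x (k.succAbove i)) ⬝ᵥ (subAt A k).mulVec (fun i => x (k.succAbove i))
      = star x ⬝ᵥ A.mulVec x := by
  simp only [dotProduct, mulVec, subAt, submatrix_apply, Pi.star_apply]
  rw [Fin.sum_univ_succAbove (fun i => star (x i) * ∑ j, A i j * x j) k]
  rw [hxk]
  simp only [star_zero, zero_mul, zero_add]
  refine Finset.sum_congr rfl fun i _ => ?_
  congr 1
  rw [Fin.sum_univ_succAbove (fun j => A (k.succAbove i) j * x j) k, hxk]
  simp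

lemma norm_delete {n : ℕ} (k : Fin (n+1)) (x : Fin (n+1) → ℂ) (hxk : x k = 0) :
    star (fun i => x (k.succAbove i)) ⬝ᵥ (fun i => x (k.succAbove i))
      = star x ⬝ᵥ x := by
  simp only [dotProduct, Pi.star_apply]
  rw [Fin.sum_univ_succAbove (fun i => star (x i) * x i) k, hxk]
  simp

/-- If `v, w` are orthonormal eigenvectors of `A` for `λ` and `μ` whose `k`-th entries both
vanish, then the whole closed segment `[λ, μ]` lies in `F(A_{(k)})`. -/
theorem segment_subset_fov_deleted {n : ℕ} (hn : 1 ≤ n)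
    (A : Matrix (Fin (n + 1)) (Fin (n + 1)) ℂ) (k : Fin (n + 1)) (lam mu : ℂ)
    (v w : Fin (n + 1) → ℂ)
    (hv : star v ⬝ᵥ v = 1) (hw : star w ⬝ᵥ w = 1) (hvw : star v ⬝ᵥ w = 0)
    (heigv : A.mulVec v = lam • v) (heigw : A.mulVec w = mu • w)
    (hvk : v k = 0) (hwk : w k = 0) :
    segment ℝ lam mu ⊆ fov (subAt A k) := by
  rintro z ⟨a, b, ha, hb, hab, rfl⟩
  have hwv : star w ⬝ᵥ v = 0 := by
    have := congrArg star hvw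
    rwa [star_dotProduct, star_star, star_zero] at this
  set x : Fin (n+1) → ℂ := (Real.sqrt a : ℂ) • v + (Real.sqrt b : ℂ) • w with hxdef
  have hxk : x k = 0 := by simp [hxdef, hvk, hwk]
  have hsa : ((Real.sqrt a : ℂ)) * (Real.sqrt a : ℂ) = (a : ℂ) := by
    rw [← Complex.ofReal_mul, Real.mul_self_sqrt ha]
  have hsb : ((Real.sqrt b : ℂ)) * (Real.sqrt b : ℂ) = (b : ℂ) := by
    rw [← Complex.ofReal_mul, Real.mul_self_sqrt hb]
  have hstara : star ((Real.sqrt a : ℂ)) = (Real.sqrt a : ℂ) := by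
    simp [Complex.star_def, Complex.conj_ofReal]
  have hstarb : star ((Real.sqrt b : ℂ)) = (Real.sqrt b : ℂ) := by
    simp [Complex.star_def, Complex.conj_ofReal]
  have hxx : star x ⬝ᵥ x = 1 := by
    simp only [hxdef, star_add, star_smul, add_dotProduct, dotProduct_add,
      smul_dotProduct, dotProduct_smul, hv, hw, hvw, hwv, hstara, hstarb,
      smul_eq_mul, mul_zero, mul_one, add_zero, zero_add]
    rw [hsa, hsb]
    norm_cast
  have hAx : star x ⬝ᵥ A.mulVec x = a • lam + b • mu := by
    have hmv : A.mulVec x = (Real.sqrt a : ℂ) • (lam • v) + (Real.sqrt b : ℂ) • (mu • w) := by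
      simp [hxdef, mulVec_add, mulVec_smul, heigv, heigw]
    rw [hmv]
    simp only [hxdef, star_add, star_smul, add_dotProduct, dotProduct_add,
      smul_dotProduct, dotProduct_smul, dotProduct_smul, hstara, hstarb, smul_eq_mul]
    rw [hv, hw, hvw, hwv]
    simp only [mul_zero, mul_one, add_zero, zero_add]
    simp only [Complex.real_smul]
    linear_combination lam * hsa + mu * hsb
  exact ⟨fun i => x (k.succAbove i), by rw [norm_delete k x hxk, hxx],
    by rw [dot_delete A k x hxk, hAx]⟩
end

section
/- Let n ≥ 2, let A be an n-by-n complex matrix, and let v, w ∈ ℂⁿ be orthonormal eigenvectors of A with Av = λv and Aw = μw. If the k-th entries of v and w are both nonzero (v_k ≠ 0 and w_k ≠ 0), then there exists t ∈ (0, 1) such that (1 − t)λ + tμ belongs to the field of values of the principal submatrix A_{(k)}; i.e., F(A_{(k)}) meets the open segment between λ and μ. -/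
open Matrix Complex

/-!
The vector `x = w_k v - v_k w` vanishes in coordinate `k`, so its Rayleigh quotient for `A` is
also one for `A_{(k)}` (drop the `k`-th entry of `x`). Orthonormality of the eigenvectors gives
`x* x = |w_k|² + |v_k|²` and `x* A x = |w_k|² λ + |v_k|² μ`, hence the quotient is
`(1 - t) λ + t μ` with `t = |v_k|² / (|w_k|² + |v_k|²) ∈ (0, 1)`.
-/

namespace Matrix

variable {R : Type*} {n : ℕ}

theorem dotProduct_comp_succAbove_of_apply_eq_zero [NonUnitalNonAssocSemiring R]
    {u : Fin (n + 1) → R} (y : Fin (n + 1) → R) {k : Fin (n + 1)} (hu : u k = 0) :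
    (u ∘ k.succAbove) ⬝ᵥ (y ∘ k.succAbove) = u ⬝ᵥ y := by
  simp [dotProduct, Fin.sum_univ_succAbove _ k, hu]

theorem submatrix_succAbove_mulVec_comp_of_apply_eq_zero [NonUnitalNonAssocSemiring R]
    (A : Matrix (Fin (n + 1)) (Fin (n + 1)) R) {x : Fin (n + 1) → R} {k : Fin (n + 1)}
    (hx : x k = 0) :
    A.submatrix k.succAbove k.succAbove *ᵥ (x ∘ k.succAbove) = (A *ᵥ x) ∘ k.succAbove := by
  ext i
  simp [mulVec, dotProduct, Fin.sum_univ_succAbove _ k, hx]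

theorem star_add_smul_dotProduct_add_smul {m : Type*} [Fintype m] [CommRing R]
    [StarRing R] {v w : m → R} (hv : star v ⬝ᵥ v = 1) (hw : star w ⬝ᵥ w = 1)
    (hvw : star v ⬝ᵥ w = 0) (a b p q : R) :
    star (a • v + b • w) ⬝ᵥ (p • v + q • w) = star a * p + star b * q := by
  have hwv : star w ⬝ᵥ v = 0 := by rw [star_dotProduct, hvw, star_zero]
  simp [add_dotProduct, dotProduct_add, smul_dotProduct, dotProduct_smul, star_smul, hv, hw, hvw,
    hwv, mul_comm]

theorem mulVec_add_smul_of_eigenvectors {m : Type*} [Fintype m] [CommRing R]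
    {A : Matrix m m R} {v w : m → R} {lam mu : R} (hv : A *ᵥ v = lam • v)
    (hw : A *ᵥ w = mu • w) (a b : R) :
    A *ᵥ (a • v + b • w) = (a * lam) • v + (b * mu) • w := by
  rw [mulVec_add, mulVec_smul, mulVec_smul, hv, hw, smul_smul, smul_smul]

end Matrix

theorem div_mem_fov {n : ℕ} (A : Matrix (Fin n) (Fin n) ℂ) {x : Fin n → ℂ} {r : ℝ} (hr : 0 < r)
    (hx : star x ⬝ᵥ x = r) : star x ⬝ᵥ A *ᵥ x / r ∈ fov A := by
  set c : ℂ := (√r : ℂ)⁻¹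
  have hc : star c * c = (r : ℂ)⁻¹ := by
    rw [Complex.star_def, map_inv₀, conj_ofReal, ← mul_inv, ← ofReal_mul,
      Real.mul_self_sqrt hr.le]
  refine ⟨c • x, ?_, ?_⟩
  · rw [star_smul, smul_dotProduct, dotProduct_smul, hx, smul_smul, smul_eq_mul, hc,
      inv_mul_cancel₀ (by exact_mod_cast hr.ne')]
  · rw [star_smul, mulVec_smul, smul_dotProduct, dotProduct_smul, smul_smul, smul_eq_mul, hc,
      div_eq_inv_mul]

theorem div_mem_fov_subAt {n : ℕ} (A : Matrix (Fin (n + 1)) (Fin (n + 1)) ℂ) {k : Fin (n + 1)}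
    {x : Fin (n + 1) → ℂ} (hxk : x k = 0) {r : ℝ} (hr : 0 < r) (hx : star x ⬝ᵥ x = r) :
    star x ⬝ᵥ A *ᵥ x / r ∈ fov (subAt A k) := by
  have hstar : star x k = 0 := by simp [hxk]
  have key := div_mem_fov (subAt A k) (x := x ∘ k.succAbove) hr
    (by rw [← hx]; exact dotProduct_comp_succAbove_of_apply_eq_zero x hstar)
  rwa [subAt, submatrix_succAbove_mulVec_comp_of_apply_eq_zero A hxk,
    show star (x ∘ k.succAbove) = star x ∘ k.succAbove from rfl,
    dotProduct_comp_succAbove_of_apply_eq_zero _ hstar] at key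

theorem fov_deleted_meets_open_segment_general {n : ℕ}
    (A : Matrix (Fin (n + 1)) (Fin (n + 1)) ℂ) (k : Fin (n + 1)) (lam mu : ℂ)
    (v w : Fin (n + 1) → ℂ)
    (hv : star v ⬝ᵥ v = 1) (hw : star w ⬝ᵥ w = 1) (hvw : star v ⬝ᵥ w = 0)
    (heigv : A.mulVec v = lam • v) (heigw : A.mulVec w = mu • w)
    (hvk : v k ≠ 0) (hwk : w k ≠ 0) :
    ∃ t : ℝ, t ∈ Set.Ioo (0 : ℝ) 1 ∧
      ((1 - t : ℝ) : ℂ) * lam + (t : ℂ) * mu ∈ fov (subAt A k) := by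
  set x := w k • v + (-v k) • w
  have hxk : x k = 0 := by simp only [x, Pi.add_apply, Pi.smul_apply, smul_eq_mul]; ring
  have hp : 0 < normSq (w k) := normSq_pos.mpr hwk
  have hq : 0 < normSq (v k) := normSq_pos.mpr hvk
  have hx : star x ⬝ᵥ x = (normSq (w k) + normSq (v k) : ℝ) := by
    rw [star_add_smul_dotProduct_add_smul hv hw hvw, ofReal_add, normSq_eq_conj_mul_self,
      normSq_eq_conj_mul_self, star_neg, Complex.star_def]
    ring
  have hAx : star x ⬝ᵥ A *ᵥ x = normSq (w k) * lam + normSq (v k) * mu := by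
    rw [mulVec_add_smul_of_eigenvectors heigv heigw, star_add_smul_dotProduct_add_smul hv hw hvw,
      normSq_eq_conj_mul_self, normSq_eq_conj_mul_self, star_neg, Complex.star_def]
    ring
  refine ⟨normSq (v k) / (normSq (w k) + normSq (v k)),
    ⟨by positivity, (div_lt_one (by positivity)).mpr (by linarith)⟩, ?_⟩
  convert div_mem_fov_subAt A hxk (by positivity) hx using 1
  have hr : (normSq (w k) : ℂ) + normSq (v k) ≠ 0 := by exact_mod_cast (add_pos hp hq).ne'
  rw [hAx]
  push_cast
  field_simp
  ring

/-- If `v, w` are orthonormal eigenvectors of `A` for `λ` and `μ` whose `k`-th entries are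
both nonzero, then `F(A_{(k)})` meets the open segment between `λ` and `μ`. -/
theorem fov_deleted_meets_open_segment {n : ℕ} (hn : 1 ≤ n)
    (A : Matrix (Fin (n + 1)) (Fin (n + 1)) ℂ) (k : Fin (n + 1)) (lam mu : ℂ)
    (v w : Fin (n + 1) → ℂ)
    (hv : star v ⬝ᵥ v = 1) (hw : star w ⬝ᵥ w = 1) (hvw : star v ⬝ᵥ w = 0)
    (heigv : A.mulVec v = lam • v) (heigw : A.mulVec w = mu • w)
    (hvk : v k ≠ 0) (hwk : w k ≠ 0) :
    ∃ t : ℝ, t ∈ Set.Ioo (0 : ℝ) 1 ∧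
      ((1 - t : ℝ) : ℂ) * lam + (t : ℂ) * mu ∈ fov (subAt A k) :=
  fov_deleted_meets_open_segment_general A k lam mu v w hv hw hvw heigv heigw hvk hwk
end
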